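/- arXiv:1805.04746 — 3 statements merged into one kernel-verified Lean document; each statement's English description precedes it below -/
import Mathlib

section
/- Let k ≥ 1 and let A = ℤ[t₁^{±1},…,t_{2k}^{±1}] with the bar involution sending tᵢ ↦ tᵢ⁻¹. Set s := t₁⋯t_{2k} and Q := (1−t₁)⋯(1−t_{2k}). For W ∈ A define V := W − W̄ + W·W̄·Q·(1−s⁻¹) and V⁺ := W − W·W̄·Q·s⁻¹. Then the bar of V⁺ equals −(V − V⁺). -/
/-!
STATEMENT 2: Let k ≥ 1 and A = ℤ[t₁^{±1},…,t_{2k}^{±1}] with the bar involution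
tᵢ ↦ tᵢ⁻¹.  Set s := t₁⋯t_{2k} and Q := (1−t₁)⋯(1−t_{2k}).  For W ∈ A define
V := W − W̄ + W·W̄·Q·(1−s⁻¹) and V⁺ := W − W·W̄·Q·s⁻¹.  Then V̄⁺ = −(V − V⁺).

We model A as the group algebra `AddMonoidAlgebra ℤ (Fin (2*k) → ℤ)`:
a monomial t^w corresponds to `Finsupp.single w 1`.  The bar involution is the
ring (algebra) automorphism induced by negation on the exponent group; note that
s⁻¹ is the monomial t^{(-1,…,-1)}.
-/

/-- Laurent polynomials ℤ[t₁^{±1},…,t_n^{±1}]. -/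
abbrev Laurent (n : ℕ) := AddMonoidAlgebra ℤ (Fin n → ℤ)

/-- The bar involution tᵢ ↦ tᵢ⁻¹, i.e. the ring automorphism induced by
negation on exponents. -/
noncomputable def bar (n : ℕ) : Laurent n ≃ₐ[ℤ] Laurent n :=
  AddMonoidAlgebra.domCongr ℤ ℤ (AddEquiv.neg (Fin n → ℤ))

/-- The variable tᵢ. -/
noncomputable def tvar {n : ℕ} (i : Fin n) : Laurent n :=
  AddMonoidAlgebra.single (Pi.single i 1) 1

/-- The monomial s⁻¹ = (t₁⋯t_n)⁻¹ = t₁⁻¹⋯t_n⁻¹. -/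
noncomputable def sInv (n : ℕ) : Laurent n := AddMonoidAlgebra.single (fun _ => (-1 : ℤ)) 1

/-!
The bar involution is a ring automorphism with `m̄ m = 1` for every monomial `m`. Hence
`1 - t̄ᵢ = -t̄ᵢ (1 - tᵢ)`, so `Q̄ = (-1)ⁿ s⁻¹ Q`, and the sign disappears since `n = 2k` is even.
With `s̄⁻¹ s⁻¹ = 1` this turns `V̄⁺` into `W̄ - W W̄ Q`, which is `-(V - V⁺)`.
-/

open AddMonoidAlgebra

namespace Laurent

variable {n : ℕ}

lemma bar_single (w : Fin n → ℤ) (c : ℤ) : bar n (single w c) = single (-w) c := by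
  rw [bar, domCongr_single]
  rfl

lemma bar_bar (x : Laurent n) : bar n (bar n x) = x := by
  induction x using AddMonoidAlgebra.induction_linear with
  | zero => simp only [map_zero]
  | add f g hf hg => rw [map_add, map_add, hf, hg]
  | single w c => rw [bar_single, bar_single, neg_neg]

lemma bar_single_one_mul_self (w : Fin n → ℤ) : bar n (single w 1) * single w 1 = 1 := by
  rw [bar_single, single_mul_single, neg_add_cancel, mul_one, one_def]

lemma bar_tvar_mul_tvar (i : Fin n) : bar n (tvar i) * tvar i = 1 :=
  bar_single_one_mul_self _

lemma bar_sInv_mul_sInv : bar n (sInv n) * sInv n = 1 :=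
  bar_single_one_mul_self _

lemma prod_tvar : ∏ i, tvar i = (single 1 1 : Laurent n) := by
  simp only [tvar, prod_single, Finset.univ_sum_single, Finset.prod_const_one]
  rfl

lemma bar_prod_tvar : bar n (∏ i, tvar i) = sInv n := by
  rw [prod_tvar, bar_single]
  rfl

lemma bar_one_sub_tvar (i : Fin n) : bar n (1 - tvar i) = -bar n (tvar i) * (1 - tvar i) := by
  rw [map_sub, map_one]
  linear_combination -bar_tvar_mul_tvar i

lemma bar_prod_one_sub_tvar :
    bar n (∏ i, (1 - tvar i)) = (-1) ^ n * sInv n * ∏ i, (1 - tvar i) := by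
  rw [map_prod, Finset.prod_congr rfl fun i _ => bar_one_sub_tvar i, Finset.prod_mul_distrib,
    Finset.prod_neg, Finset.card_univ, Fintype.card_fin, ← map_prod, bar_prod_tvar]

end Laurent

open Laurent in
theorem stmt_2_general (k : ℕ) (W V Vplus : Laurent (2*k))
    (hV : V = W - bar _ W + W * bar _ W *
      ((∏ i, (1 - tvar i)) * (1 - sInv (2*k))))
    (hVplus : Vplus = W - W * bar _ W * (∏ i, (1 - tvar i)) * sInv (2*k)) :
    bar _ Vplus = -(V - Vplus) := by
  subst hV hVplus
  rw [map_sub, map_mul, map_mul, map_mul, bar_bar, bar_prod_one_sub_tvar, pow_mul, neg_one_sq,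
    one_pow, one_mul]
  linear_combination (-(W * bar (2*k) W * ∏ i, (1 - tvar i))) *
    bar_sInv_mul_sInv

theorem stmt_2 (k : ℕ) (hk : 1 ≤ k) (W V Vplus : Laurent (2*k))
    (hV : V = W - bar _ W + W * bar _ W *
      ((∏ i, (1 - tvar i)) * (1 - sInv (2*k))))
    (hVplus : Vplus = W - W * bar _ W * (∏ i, (1 - tvar i)) * sInv (2*k)) :
    bar _ Vplus = -(V - Vplus) :=
  stmt_2_general k W V Vplus hV hVplus
end

section
/- Let n ≥ 1. In the formal power series ring ℚ[[q]], one has Σ_π ω^c_π · q^{|π|} = exp( M_{n−1}(q) − 1 ), where the sum is over all n-partitions π (including the empty one), M₀(q) := Σ_{i ≥ 0} qⁱ, and for n ≥ 2, M_{n−1}(q) := Σ_{i ≥ 0} P_{n−1}(i)·qⁱ with P_{n−1}(i) the number of (n−1)-partitions of size i. -/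
/-!
STATEMENT 15: Let n ≥ 1.  In ℚ[[q]]:
  Σ_π ω^c_π · q^{|π|} = exp( M_{n−1}(q) − 1 ),
the sum being over all n-partitions π, where M₀(q) = Σ_i qⁱ and, for n ≥ 2,
M_{n−1}(q) = Σ_i P_{n−1}(i)·qⁱ with P_{n−1}(i) the number of (n−1)-partitions of
size i.

Modelling: partitions are 0-indexed weakly decreasing finitely supported functions
ℕⁿ → ℕ (so 0-partitions are constants c, of size c, matching M₀(q) = Σ qⁱ);
exp(X), for X = M_{n−1}(q) − 1 with zero constant term, is the series whose b-th
coefficient is Σ_a (1/a!)·(b-th coefficient of X^a) (a finite sum, as X^a has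
order ≥ a).  The (finite) sums and products defining ω^c_π and the coefficients
are `finsum`/`finprod`.
-/

/-- An `n`-partition: a function π : ℕⁿ → ℕ (0-indexed version of (ℤ_{≥1})ⁿ → ℕ),
weakly decreasing in each coordinate and with finite support. -/
structure NPartition (n : ℕ) where
  toFun : (Fin n → ℕ) → ℕ
  antitone : ∀ ⦃i j : Fin n → ℕ⦄, (∀ a, i a ≤ j a) → toFun j ≤ toFun i
  finite : (Function.support toFun).Finite

/-- The size |π| = Σ_i π(i). -/
noncomputable def NPartition.size {n : ℕ} (π : NPartition n) : ℕ := ∑ᶠ i, π.toFun i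

/-- The binary representation of an (n−1)-partition ξ, as a function ℕⁿ → ℕ:
value 1 at j iff j_n < ξ(j₁,…,j_{n−1}) (0-indexed), and 0 otherwise. -/
def binFun (n : ℕ) (hn : 1 ≤ n) (ξ : NPartition (n - 1)) : (Fin n → ℕ) → ℕ :=
  fun j => if j ⟨n - 1, by omega⟩ < ξ.toFun (fun a => j (Fin.castLE (Nat.sub_le n 1) a))
    then 1 else 0

/-- The set 𝒞_π of finitely supported ℕ-valued functions m on the nonempty
(n−1)-partitions such that π = Σ_ξ m_ξ · (binary representation of ξ). -/
def Cset (n : ℕ) (hn : 1 ≤ n) (π : NPartition n) :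
    Set ({ξ : NPartition (n - 1) // ξ.toFun ≠ 0} → ℕ) :=
  {m | (Function.support m).Finite ∧
    ∀ j : Fin n → ℕ, π.toFun j = ∑ᶠ ξ, m ξ * binFun n hn ξ.1 j}

/-- The combinatorial weight ω^c_π = Σ_{m ∈ 𝒞_π} Π_ξ 1/(m_ξ)!. -/
noncomputable def omegaC (n : ℕ) (hn : 1 ≤ n) (π : NPartition n) : ℚ :=
  ∑ᶠ m ∈ Cset n hn π, ∏ᶠ ξ, (1 / (Nat.factorial (m ξ)) : ℚ)

/-- The generating series M_n(q) = Σ_i P_n(i)·qⁱ of n-partitions. -/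
noncomputable def Mser (n : ℕ) : PowerSeries ℚ :=
  PowerSeries.mk fun i => (Nat.card {π : NPartition n // π.size = i} : ℚ)

/-! Writing `π = Σ_ξ m_ξ · bin(ξ)` forces `|π| = Σ_ξ m_ξ · |ξ|`, since the binary representation
of `ξ` has size `|ξ|`; so the `b`-th coefficient on the left is `Σ_m Π_ξ 1 / m_ξ!` over the
finitely supported `m` of weight `Σ_ξ m_ξ · |ξ| = b`. On the right, `M_{n-1} - 1 = Σ_ξ q^|ξ|` over
the nonempty `(n-1)`-partitions, and by the multinomial theorem the `b`-th coefficient of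
`(Σ_ξ q^|ξ|)^a / a!` is the same sum restricted to `Σ_ξ m_ξ = a`: this is
`exp (Σ_ξ q^|ξ|) = Π_ξ exp (q^|ξ|)`. At order `b` only the `ξ` with `|ξ| ≤ b` contribute, which
keeps every sum finite. -/

open Function
open scoped Nat

theorem PowerSeries.coeff_pow_congr {R : Type*} [CommSemiring R] {f g : PowerSeries R} {b : ℕ}
    (h : ∀ j ≤ b, coeff j f = coeff j g) (a : ℕ) : coeff b (f ^ a) = coeff b (g ^ a) := by
  rw [coeff_pow, coeff_pow]
  refine Finset.sum_congr rfl fun l hl => Finset.prod_congr rfl fun t ht => h _ ?_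
  rw [Finset.mem_finsuppAntidiag] at hl
  rw [← hl.1]
  exact Finset.single_le_sum (fun _ _ => Nat.zero_le _) ht

theorem PowerSeries.coeff_sum_X_pow_pow {R ι : Type*} [CommSemiring R] [DecidableEq ι]
    (T : Finset ι) (w : ι → ℕ) (a b : ℕ) :
    coeff b ((∑ i ∈ T, (X : PowerSeries R) ^ w i) ^ a) =
      ∑ k ∈ T.piAntidiag a, if b = ∑ i ∈ T, k i * w i then (Nat.multinomial T k : R) else 0 := by
  rw [Finset.sum_pow_eq_sum_piAntidiag, map_sum]
  refine Finset.sum_congr rfl fun k _ => ?_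
  simp_rw [← pow_mul, Finset.prod_pow_eq_pow_sum, ← map_natCast (C (R := R)), coeff_C_mul_X_pow,
    mul_comm (w _)]

theorem Nat.inv_factorial_mul_multinomial {ι : Type*} (T : Finset ι) (k : ι → ℕ) :
    ((∑ i ∈ T, k i)! : ℚ)⁻¹ * Nat.multinomial T k = ∏ i ∈ T, ((k i)! : ℚ)⁻¹ := by
  have hspec := congrArg (Nat.cast (R := ℚ)) (Nat.multinomial_spec T k)
  push_cast at hspec
  rw [Finset.prod_inv_distrib, ← hspec, mul_inv, mul_assoc,
    inv_mul_cancel₀ (by exact_mod_cast (Nat.multinomial_pos T k).ne'), mul_one]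

section CountingSeries

variable {ι : Type*} (w : ι → ℕ)

noncomputable def countingSeries : PowerSeries ℚ :=
  PowerSeries.mk fun j => (Nat.card {i // w i = j} : ℚ)

noncomputable def weight (k : ι → ℕ) : ℕ := ∑ᶠ i, k i * w i

def ofWeight (b : ℕ) : Set (ι → ℕ) := {k | (support k).Finite ∧ weight w k = b}

variable {w}

theorem weight_eq_sum {k : ι → ℕ} {T : Finset ι} (hk : support k ⊆ T) :
    weight w k = ∑ i ∈ T, k i * w i :=
  finsum_eq_sum_of_support_subset _ fun _ hi => hk (left_ne_zero_of_mul hi)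

theorem sum_le_weight (hw : ∀ i, 0 < w i) {k : ι → ℕ} {T : Finset ι} (hk : support k ⊆ T) :
    ∑ i ∈ T, k i ≤ weight w k := by
  rw [weight_eq_sum hk]
  exact Finset.sum_le_sum fun i _ => Nat.le_mul_of_pos_right _ (hw i)

theorem support_subset_of_mem_ofWeight {b : ℕ} {k : ι → ℕ} (hk : k ∈ ofWeight w b) :
    support k ⊆ {i | w i ≤ b} := fun i hi =>
  calc w i ≤ k i * w i := Nat.le_mul_of_pos_left _ (Nat.pos_of_ne_zero hi)
    _ ≤ weight w k :=
      single_le_finsum (f := fun i => k i * w i) i (hk.1.subset fun _ => left_ne_zero_of_mul)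
        fun _ => Nat.zero_le _
    _ = b := hk.2

theorem coeff_countingSeries_eq_coeff_sum_X_pow {b j : ℕ} (hfin : {i | w i ≤ b}.Finite)
    (hj : j ≤ b) :
    PowerSeries.coeff j (countingSeries w) =
      PowerSeries.coeff j (∑ i ∈ hfin.toFinset, (PowerSeries.X : PowerSeries ℚ) ^ w i) := by
  classical
  have hfiber : {i | w i = j} = ↑(hfin.toFinset.filter (w · = j)) := by
    ext i
    simp only [Set.mem_ofPred_eq, Finset.coe_filter, Set.Finite.mem_toFinset]
    constructor
    · rintro rfl; exact ⟨hj, rfl⟩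
    · exact And.right
  rw [countingSeries, PowerSeries.coeff_mk, map_sum]
  simp_rw [PowerSeries.coeff_X_pow, eq_comm (a := j)]
  rw [Finset.sum_boole, ← Set.ncard_coe_finset, ← hfiber, ← Nat.card_coe_set_eq]
  rfl

theorem ofWeight_eq_biUnion [DecidableEq ι] (hw : ∀ i, 0 < w i) {b : ℕ}
    (hfin : {i | w i ≤ b}.Finite) :
    ofWeight w b = ⋃ a ∈ Set.Iic b,
      ↑((hfin.toFinset.piAntidiag a).filter fun k => weight w k = b) := by
  ext k
  simp only [Set.mem_iUnion, Set.mem_Iic, Finset.coe_filter, Finset.mem_piAntidiag,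
    Set.Finite.mem_toFinset, Set.mem_ofPred_eq, exists_prop]
  constructor
  · intro hk
    have hsupp := support_subset_of_mem_ofWeight hk
    refine ⟨_, ?_, ⟨rfl, fun i hi => hsupp hi⟩, hk.2⟩
    exact (sum_le_weight hw fun i hi => hfin.coe_toFinset.symm ▸ hsupp hi).trans hk.2.le
  · rintro ⟨a, -, ⟨-, hsupp⟩, hweight⟩
    exact ⟨hfin.subset fun i hi => hsupp i hi, hweight⟩

theorem ofWeight_finite (hw : ∀ i, 0 < w i) {b : ℕ} (hfin : {i | w i ≤ b}.Finite) :
    (ofWeight w b).Finite := by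
  classical
  rw [ofWeight_eq_biUnion hw hfin]
  exact (Set.finite_Iic b).biUnion fun a _ => Finset.finite_toSet _

theorem inv_factorial_mul_coeff_countingSeries_pow [DecidableEq ι] {b : ℕ}
    (hfin : {i | w i ≤ b}.Finite) (a : ℕ) :
    (1 / a ! : ℚ) * PowerSeries.coeff b (countingSeries w ^ a) =
      ∑ k ∈ (hfin.toFinset.piAntidiag a).filter (weight w · = b), ∏ᶠ i, (1 / (k i)! : ℚ) := by
  rw [PowerSeries.coeff_pow_congr (fun j hj => coeff_countingSeries_eq_coeff_sum_X_pow hfin hj),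
    PowerSeries.coeff_sum_X_pow_pow, Finset.mul_sum, Finset.sum_filter]
  refine Finset.sum_congr rfl fun k hk => ?_
  rw [Finset.mem_piAntidiag] at hk
  have hsupp : support k ⊆ hfin.toFinset := fun i hi => hk.2 i hi
  simp only [weight_eq_sum hsupp, eq_comm (a := b)]
  split_ifs
  · rw [finprod_eq_prod_of_mulSupport_subset _ fun i hi => hsupp fun h => hi (by simp [h]),
      ← hk.1, one_div, Nat.inv_factorial_mul_multinomial]
    simp_rw [one_div]
  · rw [mul_zero]

theorem finsum_inv_factorial_mul_coeff_countingSeries_pow (hw : ∀ i, 0 < w i) {b : ℕ}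
    (hfin : {i | w i ≤ b}.Finite) :
    ∑ᶠ a : ℕ, (1 / a ! : ℚ) * PowerSeries.coeff b (countingSeries w ^ a) =
      ∑ᶠ k ∈ ofWeight w b, ∏ᶠ i, (1 / (k i)! : ℚ) := by
  classical
  have hempty : ∀ a, a ∉ Finset.Iic b →
      (hfin.toFinset.piAntidiag a).filter (weight w · = b) = ∅ := by
    intro a ha
    refine Finset.filter_eq_empty_iff.mpr fun k hk hweight => ha (Finset.mem_Iic.mpr ?_)
    rw [Finset.mem_piAntidiag] at hk
    exact hk.1 ▸ (sum_le_weight hw fun i hi => hk.2 i hi).trans hweight.le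
  simp_rw [inv_factorial_mul_coeff_countingSeries_pow hfin, ← finsum_mem_coe_finset]
  rw [ofWeight_eq_biUnion hw hfin, finsum_mem_biUnion,
    finsum_eq_sum_of_support_subset (s := Finset.Iic b), ← finsum_mem_coe_finset, Finset.coe_Iic]
  · intro a ha
    by_contra hab
    exact ha (by simp only [hempty a hab, Finset.coe_empty, finsum_mem_empty])
  · intro a _ a' _ hne
    refine Finset.disjoint_coe.mpr (Finset.disjoint_left.mpr fun k hk hk' => hne ?_)
    rw [← (Finset.mem_piAntidiag.mp (Finset.mem_filter.mp hk).1).1,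
      ← (Finset.mem_piAntidiag.mp (Finset.mem_filter.mp hk').1).1]
  · exact Set.finite_Iic b
  · exact fun a _ => Finset.finite_toSet _

end CountingSeries

namespace NPartition

variable {k : ℕ}

theorem toFun_injective : Injective (toFun : NPartition k → (Fin k → ℕ) → ℕ) := by
  rintro ⟨f, _, _⟩ ⟨g, _, _⟩ rfl
  rfl

theorem sum_le_size (π : NPartition k) (S : Finset (Fin k → ℕ)) :
    ∑ j ∈ S, π.toFun j ≤ π.size := by
  rw [size, finsum_eq_sum _ π.finite]
  exact Finset.sum_le_sum_of_ne_zero fun j _ hj => π.finite.mem_toFinset.mpr hj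

theorem le_size (π : NPartition k) (j : Fin k → ℕ) : π.toFun j ≤ π.size := by
  simpa using π.sum_le_size {j}

theorem size_eq_zero_iff (π : NPartition k) : π.size = 0 ↔ π.toFun = 0 := by
  refine ⟨fun h => funext fun j => Nat.eq_zero_of_le_zero (h ▸ π.le_size j), fun h => ?_⟩
  simp [size, h]

theorem lt_size_of_ne_zero (π : NPartition k) {j : Fin k → ℕ} (hj : π.toFun j ≠ 0)
    (a : Fin k) : j a < π.size := by
  -- lowering the `a`-th coordinate of `j` gives `j a + 1` distinct points where `π ≥ π j ≥ 1`
  calc j a < ∑ c ∈ Finset.range (j a + 1), 1 := by simp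
    _ ≤ ∑ c ∈ Finset.range (j a + 1), π.toFun (update j a c) := by
        refine Finset.sum_le_sum fun c hc => ?_
        refine (Nat.one_le_iff_ne_zero.mpr hj).trans (π.antitone fun b => ?_)
        rcases eq_or_ne b a with rfl | hb
        · simpa [Nat.lt_succ_iff] using hc
        · simp [update_of_ne hb]
    _ = ∑ x ∈ (Finset.range (j a + 1)).image (update j a), π.toFun x :=
        (Finset.sum_image fun _ _ _ _ h => update_injective j a h).symm
    _ ≤ π.size := π.sum_le_size _

theorem finite_setOf_size_eq (k b : ℕ) : {π : NPartition k | π.size = b}.Finite := by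
  rw [← Set.finite_coe_iff]
  refine Finite.of_injective (β := (Fin k → Fin b) → Fin (b + 1))
    (fun π j => ⟨π.1.toFun fun a => j a, Nat.lt_succ_of_le ((π.1.le_size _).trans_eq π.2)⟩) ?_
  rintro ⟨π, hπ⟩ ⟨π', hπ'⟩ h
  refine Subtype.ext (toFun_injective (funext fun j => ?_))
  by_cases hjb : ∀ a, j a < b
  · simpa using congrArg Fin.val (congrFun h fun a => ⟨j a, hjb a⟩)
  · obtain ⟨a, ha⟩ : ∃ a, b ≤ j a := by simpa using hjb
    have hzero : ∀ ρ : NPartition k, ρ.size = b → ρ.toFun j = 0 := fun ρ hρ => by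
      by_contra h
      have := ρ.lt_size_of_ne_zero h a
      omega
    rw [hzero π hπ, hzero π' hπ']

end NPartition

section BinaryRepresentation

variable {m : ℕ} (hn : 1 ≤ m + 1)

theorem finsum_ite_lt (n : ℕ) : ∑ᶠ c : ℕ, (if c < n then 1 else 0) = n := by
  rw [finsum_eq_sum_of_support_subset (s := Finset.range n) _ fun c hc => by
    by_contra h
    simp_all]
  rw [Finset.sum_congr rfl fun c hc => if_pos (Finset.mem_range.mp hc)]
  simp

theorem NPartition.finite_support_ite_lt (ξ : NPartition m) :
    (support fun p : (Fin m → ℕ) × ℕ => if p.2 < ξ.toFun p.1 then 1 else 0).Finite := by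
  refine (ξ.finite.prod (Set.finite_Iio ξ.size)).subset fun p hp => ?_
  have hlt : p.2 < ξ.toFun p.1 := by
    by_contra h
    simp [h] at hp
  exact ⟨Nat.ne_zero_of_lt hlt, hlt.trans_le (ξ.le_size _)⟩

theorem binFun_eq_comp (ξ : NPartition m) :
    binFun (m + 1) hn ξ = (fun p : (Fin m → ℕ) × ℕ => if p.2 < ξ.toFun p.1 then 1 else 0) ∘
      ((Fin.snocEquiv fun _ => ℕ).symm.trans (Equiv.prodComm _ _)) :=
  rfl

theorem binFun_antitone (ξ : NPartition m) ⦃i j : Fin (m + 1) → ℕ⦄ (h : ∀ a, i a ≤ j a) :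
    binFun (m + 1) hn ξ j ≤ binFun (m + 1) hn ξ i := by
  simp only [binFun_eq_comp, comp_apply, Equiv.trans_apply, Fin.snocEquiv_symm_apply,
    Equiv.prodComm_apply, Prod.swap_prod_mk]
  split_ifs with hj hi <;> try simp
  exact hi ((h _).trans_lt (hj.trans_le (ξ.antitone fun a => h _)))

theorem binFun_support_finite (ξ : NPartition m) : (support (binFun (m + 1) hn ξ)).Finite := by
  rw [binFun_eq_comp, support_comp_eq_preimage]
  exact ξ.finite_support_ite_lt.preimage (Equiv.injective _).injOn

theorem finsum_binFun (ξ : NPartition m) : ∑ᶠ j, binFun (m + 1) hn ξ j = ξ.size := by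
  calc ∑ᶠ j, binFun (m + 1) hn ξ j
      = ∑ᶠ p : (Fin m → ℕ) × ℕ, if p.2 < ξ.toFun p.1 then 1 else 0 := by
        rw [binFun_eq_comp]
        exact finsum_comp_equiv
          (f := fun p : (Fin m → ℕ) × ℕ => if p.2 < ξ.toFun p.1 then 1 else 0) _
    _ = ∑ᶠ (x) (c), if c < ξ.toFun x then 1 else 0 := finsum_curry _ ξ.finite_support_ite_lt
    _ = ξ.size := finsum_congr fun x => finsum_ite_lt _

end BinaryRepresentation

abbrev NonzeroNPartition (m : ℕ) := {ξ : NPartition m // ξ.toFun ≠ 0}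

theorem NonzeroNPartition.size_pos {m : ℕ} (ξ : NonzeroNPartition m) : 0 < ξ.1.size :=
  Nat.pos_of_ne_zero (mt ξ.1.size_eq_zero_iff.mp ξ.2)

theorem NonzeroNPartition.finite_setOf_size_le (m b : ℕ) :
    {ξ : NonzeroNPartition m | ξ.1.size ≤ b}.Finite := by
  refine ((Set.finite_Iic b).biUnion fun j _ => NPartition.finite_setOf_size_eq m j).preimage
    Subtype.val_injective.injOn |>.subset fun ξ hξ => ?_
  exact Set.mem_biUnion (Set.mem_Iic.mpr hξ) rfl

theorem Mser_sub_one_eq_countingSeries (m : ℕ) :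
    Mser m - 1 = countingSeries fun ξ : NonzeroNPartition m => ξ.1.size := by
  ext i
  rw [map_sub, PowerSeries.coeff_one, Mser, countingSeries, PowerSeries.coeff_mk,
    PowerSeries.coeff_mk]
  split_ifs with hi
  · subst hi
    have hnone : IsEmpty {ξ : NonzeroNPartition m // ξ.1.size = 0} :=
      ⟨fun ξ => ξ.1.2 (ξ.1.1.size_eq_zero_iff.mp ξ.2)⟩
    have hone : Nat.card {π : NPartition m // π.size = 0} = 1 := by
      refine Nat.card_eq_one_iff_unique.mpr ⟨⟨fun π π' => ?_⟩,
        ⟨⟨⟨fun _ => 0, fun _ _ _ => le_rfl, by simp⟩, by simp [NPartition.size]⟩⟩⟩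
      exact Subtype.ext (NPartition.toFun_injective
        ((π.1.size_eq_zero_iff.mp π.2).trans (π'.1.size_eq_zero_iff.mp π'.2).symm))
    simp [hone]
  · have e : {π : NPartition m // π.size = i} ≃ {ξ : NonzeroNPartition m // ξ.1.size = i} :=
      ((Equiv.subtypeSubtypeEquivSubtypeInter (fun π : NPartition m => π.toFun ≠ 0)
        fun π => π.size = i).trans (Equiv.subtypeEquivRight fun π =>
          and_iff_right_of_imp fun h h0 => hi (h ▸ π.size_eq_zero_iff.mpr h0))).symm
    rw [Nat.card_congr e, sub_zero]

section Decomposition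

variable {m : ℕ} (hn : 1 ≤ m + 1)

noncomputable def binSum (k : NonzeroNPartition m → ℕ) (hk : (support k).Finite) :
    NPartition (m + 1) where
  toFun j := ∑ᶠ ξ, k ξ * binFun (m + 1) hn ξ.1 j
  antitone i j h := finsum_le_finsum' (hk.subset fun _ => left_ne_zero_of_mul)
    (hk.subset fun _ => left_ne_zero_of_mul) fun ξ =>
      Nat.mul_le_mul_left _ (binFun_antitone hn ξ.1 h)
  finite := (hk.biUnion fun ξ _ => binFun_support_finite hn ξ.1).subset fun j hj => by
    obtain ⟨ξ, hξ⟩ : ∃ ξ, k ξ * binFun (m + 1) hn ξ.1 j ≠ 0 := by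
      by_contra! h
      exact hj (finsum_eq_zero_of_forall_eq_zero h)
    exact Set.mem_biUnion (left_ne_zero_of_mul hξ) (right_ne_zero_of_mul hξ)

theorem mem_Cset_iff {π : NPartition (m + 1)} {k : NonzeroNPartition m → ℕ} :
    k ∈ Cset (m + 1) hn π ↔ ∃ hk, binSum hn k hk = π :=
  ⟨fun ⟨hk, hπ⟩ => ⟨hk, NPartition.toFun_injective (funext hπ).symm⟩,
    fun ⟨hk, hπ⟩ => ⟨hk, fun _ => hπ ▸ rfl⟩⟩

theorem size_binSum (k : NonzeroNPartition m → ℕ) (hk : (support k).Finite) :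
    (binSum hn k hk).size = weight (fun ξ => ξ.1.size) k := by
  have hsupp : support k ⊆ hk.toFinset := hk.coe_toFinset.symm.subset
  calc (binSum hn k hk).size
      = ∑ᶠ j, ∑ ξ ∈ hk.toFinset, k ξ * binFun (m + 1) hn ξ.1 j :=
        finsum_congr fun j => finsum_eq_sum_of_support_subset _ fun ξ hξ =>
          hsupp (left_ne_zero_of_mul hξ)
    _ = ∑ ξ ∈ hk.toFinset, k ξ * ξ.1.size := by
        rw [finsum_sum_comm _ (fun j ξ => k ξ * binFun (m + 1) hn ξ.1 j) fun ξ _ =>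
          (binFun_support_finite hn ξ.1).subset fun _ => right_ne_zero_of_mul]
        exact Finset.sum_congr rfl fun ξ _ => by rw [← mul_finsum, finsum_binFun]
    _ = weight (fun ξ => ξ.1.size) k := (weight_eq_sum hsupp).symm

theorem finsum_omegaC_setOf_size_eq (b : ℕ) :
    ∑ᶠ π ∈ {π : NPartition (m + 1) | π.size = b}, omegaC (m + 1) hn π =
      ∑ᶠ k ∈ ofWeight (fun ξ : NonzeroNPartition m => ξ.1.size) b, ∏ᶠ ξ, (1 / (k ξ)! : ℚ) := by
  have hunion : ofWeight (fun ξ : NonzeroNPartition m => ξ.1.size) b =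
      ⋃ π ∈ {π : NPartition (m + 1) | π.size = b}, Cset (m + 1) hn π := by
    ext k
    constructor
    · rintro ⟨hk, hweight⟩
      exact Set.mem_biUnion ((size_binSum hn k hk).trans hweight)
        ((mem_Cset_iff hn).mpr ⟨hk, rfl⟩)
    · intro h
      obtain ⟨π, hπ, hkπ⟩ := Set.mem_iUnion₂.mp h
      obtain ⟨hk, rfl⟩ := (mem_Cset_iff hn).mp hkπ
      exact ⟨hk, (size_binSum hn k hk).symm.trans hπ⟩
  rw [hunion, finsum_mem_biUnion]
  · rfl
  · intro π _ π' _ hne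
    refine Set.disjoint_left.mpr fun k hk hk' => hne ?_
    obtain ⟨_, rfl⟩ := (mem_Cset_iff hn).mp hk
    obtain ⟨_, rfl⟩ := (mem_Cset_iff hn).mp hk'
    rfl
  · exact NPartition.finite_setOf_size_eq _ _
  · intro π hπ
    refine (ofWeight_finite NonzeroNPartition.size_pos
      (NonzeroNPartition.finite_setOf_size_le m b)).subset ?_
    rw [hunion]
    exact Set.subset_biUnion_of_mem (u := fun π => Cset (m + 1) hn π) hπ

end Decomposition

theorem stmt_15 (n : ℕ) (hn : 1 ≤ n) :
    (PowerSeries.mk fun b => ∑ᶠ π ∈ {π : NPartition n | π.size = b}, omegaC n hn π) =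
      (PowerSeries.mk fun b => ∑ᶠ a : ℕ,
        (1 / (Nat.factorial a) : ℚ) * PowerSeries.coeff b ((Mser (n - 1) - 1) ^ a)) := by
  obtain ⟨m, rfl⟩ : ∃ m, n = m + 1 := ⟨n - 1, by omega⟩
  ext b
  rw [PowerSeries.coeff_mk, PowerSeries.coeff_mk, Nat.add_sub_cancel,
    Mser_sub_one_eq_countingSeries,
    finsum_inv_factorial_mul_coeff_countingSeries_pow NonzeroNPartition.size_pos
      (NonzeroNPartition.finite_setOf_size_le m b), finsum_omegaC_setOf_size_eq]
end

section
/- Let π be the 7-partition of size 9 defined by π(1,1,1,1,1,1,1) = 2, π(i₁,…,i₇) = 1 whenever exactly one of the indices equals 2 and all others equal 1, and π(i₁,…,i₇) = 0 otherwise (this is the 7-partition whose character is Z_π = 1 + t₁ + t₂ + t₃ + t₄ + t₅ + t₆ + t₇ + t₈). Then ω^c_π = 64 = 1 + 7 + C(7,2) + C(7,3), where C(a,b) is the binomial coefficient. -/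
/-- The 7-partition with value 2 at the origin, 1 at the standard basis points,
and 0 elsewhere (0-indexed). -/
noncomputable def f17 : (Fin 7 → ℕ) → ℕ := fun j =>
  if j = 0 then 2 else if ∃ a : Fin 7, j = Pi.single a 1 then 1 else 0


open Finset Function

abbrev NonemptyNPartition (d : ℕ) := {ξ : NPartition d // ξ.toFun ≠ 0}

theorem NPartition.toFun_injective_s17 {n : ℕ} : Injective (NPartition.toFun (n := n)) := by
  rintro ⟨f, _, _⟩ ⟨g, _, _⟩ (rfl : f = g)
  rfl

theorem NPartition.toFun_zero_pos {n : ℕ} {ξ : NPartition n} (hξ : ξ.toFun ≠ 0) :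
    0 < ξ.toFun 0 := by
  obtain ⟨i, hi⟩ := Function.ne_iff.mp hξ
  exact (Nat.pos_of_ne_zero hi).trans_le (ξ.antitone fun a => Nat.zero_le (i a))

namespace Fin

variable {d : ℕ} {M : Type*} [Zero M]

theorem init_single_last (x : M) : init (Pi.single (last d) x : Fin (d + 1) → M) = 0 := by
  funext b
  simp [init, castSucc_ne_last]

theorem init_single_castSucc (b : Fin d) (x : M) :
    init (Pi.single b.castSucc x : Fin (d + 1) → M) = Pi.single b x := by
  funext a
  simp [init, Pi.single_apply]

theorem snoc_eq_zero_iff (i : Fin d → M) (x : M) :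
    (snoc i x : Fin (d + 1) → M) = 0 ↔ i = 0 ∧ x = 0 := by
  rw [← snoc_init_self (0 : Fin (d + 1) → M), snoc_inj]
  rfl

theorem snoc_eq_single_last_iff (i : Fin d → M) (x y : M) :
    (snoc i x : Fin (d + 1) → M) = Pi.single (last d) y ↔ i = 0 ∧ x = y := by
  rw [← snoc_init_self (Pi.single (last d) y : Fin (d + 1) → M), snoc_inj, init_single_last,
    Pi.single_eq_same]

theorem snoc_eq_single_castSucc_iff (i : Fin d → M) (x y : M) (b : Fin d) :
    (snoc i x : Fin (d + 1) → M) = Pi.single b.castSucc y ↔ i = Pi.single b y ∧ x = 0 := by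
  rw [← snoc_init_self (Pi.single b.castSucc y : Fin (d + 1) → M), snoc_inj,
    init_single_castSucc, Pi.single_eq_of_ne (castSucc_ne_last b).symm]

end Fin

theorem Pi.single_left_inj {ι M : Type*} [DecidableEq ι] [Zero M] {a b : ι} {x : M}
    (hx : x ≠ 0) : (Pi.single a x : ι → M) = Pi.single b x ↔ a = b := by
  refine ⟨fun h => by_contra fun hab => hx ?_, fun h => h ▸ rfl⟩
  simpa [Pi.single_eq_of_ne hab] using congrFun h a

theorem Pi.eq_zero_or_eq_of_le_single_one {ι : Type*} [DecidableEq ι] {a : ι} {i : ι → ℕ}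
    (h : i ≤ Pi.single a 1) : i = 0 ∨ i = Pi.single a 1 := by
  have hi : i = Pi.single a (i a) := by
    funext b
    by_cases hb : b = a
    · subst hb; simp
    · simpa [hb] using h b
  rcases Nat.le_one_iff_eq_zero_or_eq_one.mp (by simpa using h a) with h0 | h1
  · left; rw [hi, h0, Pi.single_zero]
  · right; rw [hi, h1]

section Corner

variable {d : ℕ}

def cornerFun (c : ℕ) (S : Finset (Fin d)) (i : Fin d → ℕ) : ℕ :=
  if i = 0 then c else if ∃ a ∈ S, i = Pi.single a 1 then 1 else 0

variable {c : ℕ} {S : Finset (Fin d)}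

@[simp]
theorem cornerFun_zero : cornerFun c S 0 = c := if_pos rfl

@[simp]
theorem cornerFun_single (a : Fin d) :
    cornerFun c S (Pi.single a 1) = if a ∈ S then 1 else 0 := by
  simp [cornerFun, Pi.single_left_inj one_ne_zero]

theorem cornerFun_eq_zero {i : Fin d → ℕ} (h0 : i ≠ 0) (h1 : ∀ a, i ≠ Pi.single a 1) :
    cornerFun c S i = 0 := by
  simp [cornerFun, h0, h1]

theorem cornerFun_antitone (hc : c ≠ 0) : Antitone (cornerFun c S) := by
  intro i j hij
  by_cases hj0 : j = 0
  · obtain rfl : i = 0 := funext fun a => Nat.le_zero.mp (by simpa [hj0] using hij a)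
    simp [hj0]
  by_cases hj1 : ∃ a ∈ S, j = Pi.single a 1
  · obtain ⟨a, ha, rfl⟩ := hj1
    rcases Pi.eq_zero_or_eq_of_le_single_one hij with rfl | rfl
    · simpa [ha] using Nat.one_le_iff_ne_zero.mpr hc
    · rfl
  · simp [cornerFun, hj0, hj1]

theorem cornerFun_support_finite : (support (cornerFun c S)).Finite := by
  refine ((Set.finite_range fun a : Fin d => (Pi.single a 1 : Fin d → ℕ)).insert 0).subset ?_
  intro i hi
  by_contra h
  simp only [Set.mem_insert_iff, Set.mem_range, not_or] at h
  exact hi (cornerFun_eq_zero h.1 fun a ha => h.2 ⟨a, ha.symm⟩)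

theorem cornerFun_inj {c' : ℕ} {T : Finset (Fin d)} :
    cornerFun c S = cornerFun c' T ↔ c = c' ∧ S = T := by
  refine ⟨fun h => ⟨by simpa using congrFun h 0, ?_⟩, fun h => by rw [h.1, h.2]⟩
  ext a
  have := congrFun h (Pi.single a 1)
  simp only [cornerFun_single] at this
  split_ifs at this <;> tauto

theorem eq_cornerFun_of_le {f : (Fin d → ℕ) → ℕ} (h : f ≤ cornerFun c univ) :
    f = cornerFun (f 0) (univ.filter fun a => f (Pi.single a 1) ≠ 0) := by
  funext i
  by_cases h0 : i = 0
  · simp [h0]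
  by_cases h1 : ∃ a, i = Pi.single a 1
  · obtain ⟨a, rfl⟩ := h1
    have := h (Pi.single a 1)
    simp only [cornerFun_single, mem_univ, if_true, mem_filter, true_and] at this ⊢
    split_ifs <;> omega
  · push Not at h1
    rw [cornerFun_eq_zero h0 h1]
    simpa [cornerFun_eq_zero h0 h1] using h i

def corner (c : ℕ) (hc : c ≠ 0) (S : Finset (Fin d)) : NonemptyNPartition d :=
  ⟨⟨cornerFun c S, fun _ _ h => cornerFun_antitone hc h, cornerFun_support_finite⟩,
    fun h => hc (by simpa using congrFun h 0)⟩

@[simp]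
theorem corner_toFun (hc : c ≠ 0) : (corner c hc S).1.toFun = cornerFun c S := rfl

theorem corner_inj {c' : ℕ} {T : Finset (Fin d)} (hc : c ≠ 0) (hc' : c' ≠ 0) :
    corner c hc S = corner c' hc' T ↔ c = c' ∧ S = T := by
  rw [← cornerFun_inj, Subtype.ext_iff, NPartition.toFun_injective_s17.eq_iff.symm]
  rfl

end Corner

section Binary

variable {d : ℕ} (hn : 1 ≤ d + 1)

theorem binFun_apply (ξ : NPartition d) (j : Fin (d + 1) → ℕ) :
    binFun (d + 1) hn ξ j = if j (Fin.last d) < ξ.toFun (Fin.init j) then 1 else 0 := rfl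

theorem binFun_snoc (ξ : NPartition d) (i : Fin d → ℕ) (k : ℕ) :
    binFun (d + 1) hn ξ (Fin.snoc i k) = if k < ξ.toFun i then 1 else 0 := by
  rw [binFun_apply, Fin.init_snoc, Fin.snoc_last]

theorem binFun_injective : Injective (binFun (d + 1) hn) := by
  intro ξ η h
  refine NPartition.toFun_injective_s17 (funext fun i => eq_of_forall_lt_iff fun k => ?_)
  have := congrFun h (Fin.snoc i k)
  simp only [binFun_snoc] at this
  split_ifs at this <;> tauto

theorem cornerFun_two_univ_snoc (S : Finset (Fin d)) (i : Fin d → ℕ) (k : ℕ) :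
    cornerFun 2 univ (Fin.snoc i k : Fin (d + 1) → ℕ) =
      (if k < cornerFun 2 S i then 1 else 0) + (if k < cornerFun 1 Sᶜ i then 1 else 0) := by
  by_cases h0 : i = 0
  · subst h0
    rcases k with _ | _ | k <;>
      simp [cornerFun, Fin.snoc_eq_zero_iff, Fin.exists_fin_succ', Fin.snoc_eq_single_last_iff,
        Fin.snoc_eq_single_castSucc_iff]
  by_cases h1 : ∃ a, i = Pi.single a 1
  · obtain ⟨a, rfl⟩ := h1
    simp [cornerFun, Fin.snoc_eq_zero_iff, Fin.exists_fin_succ', Fin.snoc_eq_single_last_iff,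
      Fin.snoc_eq_single_castSucc_iff, Pi.single_left_inj]
    split_ifs <;> omega
  · push Not at h1
    simp [cornerFun, Fin.snoc_eq_zero_iff, Fin.exists_fin_succ', Fin.snoc_eq_single_last_iff,
      Fin.snoc_eq_single_castSucc_iff, h0, h1]

theorem cornerFun_two_univ_eq_binFun_add (S : Finset (Fin d)) :
    cornerFun 2 univ = binFun (d + 1) hn (corner 2 two_ne_zero S).1 +
      binFun (d + 1) hn (corner 1 one_ne_zero Sᶜ).1 := by
  funext j
  rw [← Fin.snoc_init_self j, Pi.add_apply, binFun_snoc, binFun_snoc, corner_toFun, corner_toFun]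
  exact cornerFun_two_univ_snoc S _ _

theorem le_cornerFun_of_binFun_le {ξ : NPartition d}
    (h : binFun (d + 1) hn ξ ≤ cornerFun 2 univ) : ξ.toFun ≤ cornerFun 2 univ := by
  intro i
  refine le_of_forall_lt fun k hk => ?_
  have := h (Fin.snoc i k)
  rw [binFun_snoc, if_pos hk, cornerFun_two_univ_snoc univ] at this
  simp [cornerFun] at this ⊢
  split_ifs at this ⊢ <;> omega

end Binary

noncomputable instance (n : ℕ) : DecidableEq (NPartition n) := Classical.decEq _

section Multiplicities

theorem finsum_single_add_single_mul {α R : Type*} [DecidableEq α] [NonAssocSemiring R]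
    {a b : α} (hab : a ≠ b) (g : α → R) :
    ∑ᶠ x, ((Pi.single a 1 : α → R) x + (Pi.single b 1 : α → R) x) * g x = g a + g b := by
  rw [finsum_eq_sum_of_support_subset (s := {a, b}), sum_pair hab]
  · simp [hab, hab.symm]
  · intro x hx
    by_contra h
    simp only [coe_insert, coe_singleton, Set.mem_insert_iff, Set.mem_singleton_iff,
      not_or] at h
    simp [Pi.single_apply, h.1, h.2] at hx

theorem exists_eq_single_of_finsum_eq_one {α : Type*} [DecidableEq α] {f : α → ℕ}
    (h : ∑ᶠ x, f x = 1) : ∃ a, f = Pi.single a 1 := by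
  have hf : (support f).Finite := hasFiniteSupport_of_finsum_eq_one h
  obtain ⟨a, ha⟩ := (Finsupp.sum_eq_one_iff (Finsupp.ofSupportFinite f hf)).mp
    (by rw [← h, finsum_eq_sum f hf]; rfl)
  exact ⟨a, by rw [← Finsupp.single_eq_pi_single, ← ha, Finsupp.ofSupportFinite_coe]⟩

theorem single_add_single_mem_Cset_iff {n : ℕ} (hn : 1 ≤ n) (π : NPartition n)
    {ξ η : NonemptyNPartition (n - 1)} (hξη : ξ ≠ η) :
    Pi.single ξ 1 + Pi.single η 1 ∈ Cset n hn π ↔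
      π.toFun = binFun n hn ξ.1 + binFun n hn η.1 := by
  have hfin : (support (Pi.single ξ 1 + Pi.single η 1 : _ → ℕ)).Finite :=
    ((Set.finite_singleton ξ).union (Set.finite_singleton η)).subset
      ((support_add _ _).trans (Set.union_subset_union Pi.support_single_subset
        Pi.support_single_subset))
  simp only [Cset, Set.mem_ofPred_eq, finsum_single_add_single_mul hξη, hfin, true_and,
    funext_iff, Pi.add_apply]

variable {d : ℕ} (hn : 1 ≤ d + 1) {π : NPartition (d + 1)}

/-- `Cset (d + 1)` is indexed by `NPartition (d + 1 - 1)`, which is `NPartition d` only up to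
definitional unfolding; restating it lets `rw` and `simp` see through. -/
theorem mem_Cset_succ_iff {m : NonemptyNPartition d → ℕ} :
    m ∈ Cset (d + 1) hn π ↔ (support m).Finite ∧
      ∀ j, π.toFun j = ∑ᶠ ξ, m ξ * binFun (d + 1) hn ξ.1 j :=
  Iff.rfl

theorem exists_single_add_single_of_mem_Cset (h0 : π.toFun 0 = 2)
    (h1 : π.toFun (Pi.single (Fin.last d) 1) = 1) {m : NonemptyNPartition d → ℕ}
    (hm : m ∈ Cset (d + 1) hn π) :
    ∃ ξ η : NonemptyNPartition d, 1 < ξ.1.toFun 0 ∧ ¬ 1 < η.1.toFun 0 ∧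
      m = Pi.single ξ 1 + Pi.single η 1 := by
  obtain ⟨hfin, hsum⟩ := (mem_Cset_succ_iff hn).mp hm
  set A := {ξ : NonemptyNPartition d | 1 < ξ.1.toFun 0}
  have hA : ∑ᶠ ξ, A.indicator m ξ = 1 := by
    rw [← h1, hsum]
    refine finsum_congr fun ξ => ?_
    rw [binFun_apply, Fin.init_single_last, Pi.single_eq_same]
    simp [Set.indicator_apply, A]
  have hAc : ∑ᶠ ξ, Aᶜ.indicator m ξ = 1 := by
    have htot : ∑ᶠ ξ, m ξ = 2 := by
      rw [← h0, hsum]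
      refine finsum_congr fun ξ => ?_
      rw [binFun_apply, Pi.zero_apply, show Fin.init (0 : Fin (d + 1) → ℕ) = 0 from rfl,
        if_pos (NPartition.toFun_zero_pos ξ.2), mul_one]
    have hfin' (B : Set _) : (support (B.indicator m)).Finite := by
      rw [Set.support_indicator]
      exact hfin.inter_of_right B
    rw [← finsum_congr (Set.indicator_self_add_compl_apply A m),
      finsum_add_distrib (hfin' A) (hfin' Aᶜ), hA] at htot
    omega
  obtain ⟨ξ, hξ⟩ := exists_eq_single_of_finsum_eq_one hA
  obtain ⟨η, hη⟩ := exists_eq_single_of_finsum_eq_one hAc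
  have hξA : ξ ∈ A := Set.mem_of_indicator_ne_zero (f := m) (by simp [hξ])
  have hηA : η ∈ Aᶜ := Set.mem_of_indicator_ne_zero (f := m) (by simp [hη])
  refine ⟨ξ, η, hξA, hηA, ?_⟩
  rw [← Set.indicator_self_add_compl A m, hξ, hη]

end Multiplicities

section CornerMult

variable {d : ℕ}

noncomputable def cornerMult (S : Finset (Fin d)) : NonemptyNPartition d → ℕ :=
  Pi.single (corner 2 two_ne_zero S) 1 + Pi.single (corner 1 one_ne_zero Sᶜ) 1

theorem corner_two_ne_corner_one (S T : Finset (Fin d)) :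
    corner 2 two_ne_zero S ≠ corner 1 one_ne_zero T := by
  simp [corner_inj]

theorem cornerMult_le_one (S : Finset (Fin d)) (ξ) : cornerMult S ξ ≤ 1 := by
  have := corner_two_ne_corner_one S Sᶜ
  simp only [cornerMult, Pi.add_apply, Pi.single_apply]
  split_ifs <;> simp_all

theorem cornerMult_injective : Injective (cornerMult (d := d)) := by
  intro S T h
  simpa [cornerMult, Pi.single_apply, corner_inj] using congrFun h (corner 2 two_ne_zero S)

variable (hn : 1 ≤ d + 1) {π : NPartition (d + 1)}

theorem cornerMult_mem_Cset (hπ : π.toFun = cornerFun 2 univ) (S : Finset (Fin d)) :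
    cornerMult S ∈ Cset (d + 1) hn π :=
  (single_add_single_mem_Cset_iff hn π (corner_two_ne_corner_one S Sᶜ)).mpr
    (hπ.trans (cornerFun_two_univ_eq_binFun_add hn S))

theorem eq_cornerMult_of_mem_Cset (hπ : π.toFun = cornerFun 2 univ)
    {m : NonemptyNPartition d → ℕ} (hm : m ∈ Cset (d + 1) hn π) : ∃ S, cornerMult S = m := by
  obtain ⟨ξ, η, hξ, hη, rfl⟩ := exists_single_add_single_of_mem_Cset hn (by simp [hπ])
    (by simp [hπ]) hm
  have hξη : ξ ≠ η := ne_of_apply_ne (·.1.toFun 0) (by omega)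
  have hbin := (single_add_single_mem_Cset_iff hn π hξη).mp hm
  set S := univ.filter fun a => ξ.1.toFun (Pi.single a 1) ≠ 0
  have hξS : ξ = corner 2 two_ne_zero S := by
    have hle : ξ.1.toFun ≤ cornerFun 2 univ :=
      le_cornerFun_of_binFun_le hn (hπ ▸ hbin ▸ fun j => Nat.le_add_right _ _)
    have h2 : ξ.1.toFun 0 = 2 := le_antisymm (by simpa using hle 0) hξ
    exact Subtype.ext <| NPartition.toFun_injective_s17 <|
      (eq_cornerFun_of_le hle).trans (by rw [h2]; rfl)
  have hηS : η = corner 1 one_ne_zero Sᶜ := by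
    refine Subtype.ext (binFun_injective hn (add_left_cancel (a := binFun (d + 1) hn ξ.1) ?_))
    rw [← hbin, hπ, cornerFun_two_univ_eq_binFun_add hn S, hξS]
  exact ⟨S, by rw [cornerMult, hξS, hηS]⟩

theorem Cset_eq_range_cornerMult (hπ : π.toFun = cornerFun 2 univ) :
    Cset (d + 1) hn π = Set.range cornerMult :=
  Set.ext fun _ =>
    ⟨eq_cornerMult_of_mem_Cset hn hπ, by rintro ⟨S, rfl⟩; exact cornerMult_mem_Cset hn hπ S⟩

end CornerMult

theorem finprod_one_div_factorial_of_le_one {α : Type*} {m : α → ℕ} (hm : ∀ x, m x ≤ 1) :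
    ∏ᶠ x, (1 / (m x).factorial : ℚ) = 1 :=
  finprod_eq_one_of_forall_eq_one fun x => by simp [Nat.factorial_eq_one.mpr (hm x)]

theorem omegaC_eq_two_pow {d : ℕ} (hn : 1 ≤ d + 1) {π : NPartition (d + 1)}
    (hπ : π.toFun = cornerFun 2 univ) : omegaC (d + 1) hn π = 2 ^ d := by
  rw [omegaC, Cset_eq_range_cornerMult hn hπ, finsum_mem_range cornerMult_injective]
  simp_rw [finprod_one_div_factorial_of_le_one (cornerMult_le_one _)]
  simp [finsum_eq_sum_of_fintype, Fintype.card_finset]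

theorem f17_eq_cornerFun : f17 = cornerFun 2 univ := by
  funext j
  simp [f17, cornerFun]

theorem stmt_17 (π : NPartition 7) (hπ : π.toFun = f17) :
    omegaC 7 (by norm_num) π = 64 ∧
      (64 : ℚ) = 1 + 7 + (Nat.choose 7 2 : ℚ) + (Nat.choose 7 3 : ℚ) := by
  refine ⟨?_, by norm_num [Nat.choose]⟩
  rw [f17_eq_cornerFun] at hπ
  exact (omegaC_eq_two_pow (d := 6) _ hπ).trans (by norm_num)
end
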